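/- arXiv:2108.13199 — 2 statements merged into one kernel-verified Lean document; each statement's English description precedes it below -/
import Mathlib

section
/- The double sum ∑_{p^α ≤ n, α ≥ 1} (ln p^α)/p^α, over prime powers p^α ≤ n, equals ln n + O(1) as n → ∞. -/
def ppow (n : ℕ) : Finset (ℕ × ℕ) :=
  (Finset.range (n+1) ×ˢ Finset.range (n+1)).filter
    (fun q => q.1.Prime ∧ 1 ≤ q.2 ∧ q.1 ^ q.2 ≤ n)

/-!
Split `α log p / p^α = log p / p^α + (α - 1) log p / p^α`.

The first part sums to `∑_{m ≤ n} Λ(m) / m`, which is `log n + O(1)` by Mertens' argument: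
`log n! = ∑_{d ≤ n} Λ(d) ⌊n / d⌋` lies between `n ∑_{d ≤ n} Λ(d) / d - ψ(n)` and
`n ∑_{d ≤ n} Λ(d) / d`, while `log n! = n log n + O(n)` and `ψ(n) = O(n)` (Chebyshev).

The second part is bounded uniformly in `n`: for each prime `p`,
`∑_{α ≥ 1} (α - 1) p^{-α} = (p - 1)^{-2} ≤ 4 p^{-2}`, and `∑ log p / p^2` converges.
-/

open Finset Real
open ArithmeticFunction hiding log ppow

theorem mem_ppow {n : ℕ} {q : ℕ × ℕ} :
    q ∈ ppow n ↔ q.1.Prime ∧ 1 ≤ q.2 ∧ q.1 ^ q.2 ≤ n := by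
  refine mem_filter.trans (and_iff_right_of_imp fun ⟨hp, hk, hle⟩ => ?_)
  have hpk : q.1 ≤ q.1 ^ q.2 := Nat.le_self_pow (by omega) q.1
  have hkp : q.2 < q.1 ^ q.2 := Nat.lt_pow_self hp.one_lt
  simp only [mem_product, mem_range]
  omega

theorem injOn_pow_ppow (n : ℕ) : Set.InjOn (fun q : ℕ × ℕ => q.1 ^ q.2) (ppow n) := by
  intro q hq q' hq' h
  obtain ⟨hp, hk, -⟩ := mem_ppow.1 hq
  obtain ⟨hp', hk', -⟩ := mem_ppow.1 hq'
  obtain ⟨h1, h2⟩ := hp.pow_inj' hp' (by omega) (by omega) h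
  exact Prod.ext h1 h2

theorem image_pow_ppow (n : ℕ) :
    (ppow n).image (fun q => q.1 ^ q.2) = {m ∈ Ioc 0 n | IsPrimePow m} := by
  ext m
  simp only [mem_image, mem_filter, mem_Ioc, mem_ppow, isPrimePow_nat_iff, Prod.exists]
  constructor
  · rintro ⟨p, k, ⟨hp, hk, hle⟩, rfl⟩
    exact ⟨⟨pow_pos hp.pos k, hle⟩, p, k, hp, hk, rfl⟩
  · rintro ⟨⟨-, hle⟩, p, k, hp, hk, rfl⟩
    exact ⟨p, k, ⟨hp, hk, hle⟩, rfl⟩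

theorem sum_ppow_comp_pow {M : Type*} [AddCommMonoid M] (n : ℕ) (f : ℕ → M) :
    ∑ q ∈ ppow n, f (q.1 ^ q.2) = ∑ m ∈ Ioc 0 n with IsPrimePow m, f m := by
  rw [← image_pow_ppow, sum_image (injOn_pow_ppow n)]

theorem sum_ppow_log_div_pow (n : ℕ) :
    ∑ q ∈ ppow n, log q.1 / (q.1 : ℝ) ^ q.2 = ∑ m ∈ Ioc 0 n, Λ m / m := by
  have hsupp : ∀ m ∈ Ioc 0 n, Λ m / m ≠ (0 : ℝ) → IsPrimePow m := fun m _ h =>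
    vonMangoldt_ne_zero_iff.1 (div_ne_zero_iff.1 h).1
  rw [← sum_filter_of_ne hsupp, ← sum_ppow_comp_pow]
  refine sum_congr rfl fun q hq => ?_
  obtain ⟨hp, hk, -⟩ := mem_ppow.1 hq
  rw [vonMangoldt_apply_pow (by omega), vonMangoldt_apply_prime hp, Nat.cast_pow]

theorem sum_Ioc_sum_divisors {M : Type*} [AddCommMonoid M] (f : ℕ → M) (n : ℕ) :
    ∑ m ∈ Ioc 0 n, ∑ d ∈ m.divisors, f d = ∑ d ∈ Ioc 0 n, (n / d) • f d := by
  rw [sum_comm' (t' := Ioc 0 n) (s' := fun d => {m ∈ Ioc 0 n | d ∣ m})]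
  · simp_rw [sum_const, Nat.Ioc_filter_dvd_card_eq_div]
  · intro m d
    simp only [mem_Ioc, Nat.mem_divisors, mem_filter]
    constructor
    · rintro ⟨⟨hm, hmn⟩, hd, -⟩
      exact ⟨⟨⟨hm, hmn⟩, hd⟩, Nat.pos_of_dvd_of_pos hd hm, (Nat.le_of_dvd hm hd).trans hmn⟩
    · rintro ⟨⟨⟨hm, hmn⟩, hd⟩, -⟩
      exact ⟨⟨hm, hmn⟩, hd, hm.ne'⟩

theorem log_factorial_eq_sum_Ioc_log (n : ℕ) : log n.factorial = ∑ m ∈ Ioc 0 n, log m := by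
  induction n with
  | zero => simp
  | succ n ih =>
    rw [sum_Ioc_succ_top n.zero_le, ← ih, Nat.factorial_succ, Nat.cast_mul,
      log_mul (by positivity) (by positivity), add_comm]

theorem log_factorial_eq_sum_vonMangoldt_mul_div (n : ℕ) :
    log n.factorial = ∑ d ∈ Ioc 0 n, Λ d * (n / d : ℕ) := by
  rw [log_factorial_eq_sum_Ioc_log]
  simp_rw [← vonMangoldt_sum, sum_Ioc_sum_divisors, nsmul_eq_mul, mul_comm]

theorem log_factorial_le_mul_sum_vonMangoldt_div (n : ℕ) :
    log n.factorial ≤ n * ∑ m ∈ Ioc 0 n, Λ m / m := by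
  rw [log_factorial_eq_sum_vonMangoldt_mul_div, mul_sum]
  refine sum_le_sum fun d _ => ?_
  calc Λ d * (n / d : ℕ) ≤ Λ d * (n / d) := by gcongr; exact Nat.cast_div_le
    _ = n * (Λ d / d) := by ring

theorem mul_sum_vonMangoldt_div_sub_psi_le_log_factorial (n : ℕ) :
    n * ∑ m ∈ Ioc 0 n, Λ m / m - Chebyshev.psi n ≤ log n.factorial := by
  rw [log_factorial_eq_sum_vonMangoldt_mul_div, Chebyshev.psi, Nat.floor_natCast, mul_sum,
    ← sum_sub_distrib]
  refine sum_le_sum fun d _ => ?_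
  have hfloor : (n : ℝ) / d - 1 ≤ (n / d : ℕ) := by
    rw [← Nat.floor_div_eq_div (K := ℝ)]
    exact (Nat.sub_one_lt_floor _).le
  calc n * (Λ d / d) - Λ d = Λ d * (n / d - 1) := by ring
    _ ≤ Λ d * (n / d : ℕ) := by gcongr

theorem log_factorial_le_mul_log (n : ℕ) : log n.factorial ≤ n * log n := by
  rw [← log_pow]
  gcongr
  exact_mod_cast n.factorial_le_pow

theorem mul_log_sub_le_log_factorial (n : ℕ) : n * log n - n ≤ log n.factorial := by
  rcases n.eq_zero_or_pos with rfl | hn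
  · simp
  have hstirling := Stirling.le_log_factorial_stirling hn.ne'
  have hlog_two_pi : 0 < log (2 * π) := log_pos (by linarith [pi_gt_three])
  have hlog_n : 0 ≤ log n := log_natCast_nonneg n
  linarith

theorem abs_sum_vonMangoldt_div_sub_log_le (n : ℕ) :
    |∑ m ∈ Ioc 0 n, Λ m / m - log n| ≤ log 4 + 4 := by
  rcases n.eq_zero_or_pos with rfl | hn
  · simp only [Ioc_self, sum_empty, CharP.cast_eq_zero, log_zero, sub_zero, abs_zero]
    positivity
  set A := ∑ m ∈ Ioc 0 n, Λ m / m
  have hn' : (0 : ℝ) < n := by exact_mod_cast hn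
  have hpsi : Chebyshev.psi n ≤ (log 4 + 4) * n := Chebyshev.psi_le_const_mul_self n.cast_nonneg
  have hA_ge : log n - 1 ≤ A := le_of_mul_le_mul_left (by
    linarith [mul_log_sub_le_log_factorial n, log_factorial_le_mul_sum_vonMangoldt_div n]) hn'
  have hA_le : A ≤ log n + (log 4 + 4) := le_of_mul_le_mul_left (by
    linarith [log_factorial_le_mul_log n, mul_sum_vonMangoldt_div_sub_psi_le_log_factorial n]) hn'
  have hlog4 : 0 < log 4 := log_pos (by norm_num)
  exact abs_le.2 ⟨by linarith, by linarith⟩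

theorem sum_Icc_sub_one_mul_pow_le {x : ℝ} (hx0 : 0 ≤ x) (hx : x ≤ 1 / 2) (N : ℕ) :
    ∑ k ∈ Icc 1 N, ((k : ℝ) - 1) * x ^ k ≤ 4 * x ^ 2 := by
  have hgeom := hasSum_coe_mul_geometric_of_norm_lt_one (r := x)
    (by rw [norm_of_nonneg hx0]; linarith)
  have hshift : ∑ k ∈ Icc 1 N, ((k : ℝ) - 1) * x ^ k = x * ∑ j ∈ range N, (j : ℝ) * x ^ j := by
    induction N with
    | zero => simp
    | succ N ih =>
      rw [sum_Icc_succ_top (by omega), sum_range_succ, ih]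
      push_cast
      ring
  calc ∑ k ∈ Icc 1 N, ((k : ℝ) - 1) * x ^ k = x * ∑ j ∈ range N, (j : ℝ) * x ^ j := hshift
    _ ≤ x * (x / (1 - x) ^ 2) := by
      gcongr
      rw [← hgeom.tsum_eq]
      exact hgeom.summable.sum_le_tsum _ fun j _ => by positivity
    _ ≤ 4 * x ^ 2 := by
      have h : 1 / 4 ≤ (1 - x) ^ 2 := by nlinarith
      rw [mul_div_assoc', div_le_iff₀ (by linarith)]
      nlinarith [mul_le_mul_of_nonneg_left h (sq_nonneg x)]

theorem sum_Icc_sub_one_mul_log_div_pow_le {p : ℕ} (hp : 2 ≤ p) (N : ℕ) :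
    ∑ k ∈ Icc 1 N, ((k : ℝ) - 1) * log p / (p : ℝ) ^ k ≤ 4 * (log p / (p : ℝ) ^ 2) := by
  have hp' : (2 : ℝ) ≤ p := by exact_mod_cast hp
  have hx : (p : ℝ)⁻¹ ≤ 1 / 2 := by rw [one_div]; gcongr
  have hgeom := sum_Icc_sub_one_mul_pow_le (inv_nonneg.2 (by positivity)) hx N
  calc ∑ k ∈ Icc 1 N, ((k : ℝ) - 1) * log p / (p : ℝ) ^ k
      = log p * ∑ k ∈ Icc 1 N, ((k : ℝ) - 1) * (p : ℝ)⁻¹ ^ k := by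
        rw [mul_sum]; refine sum_congr rfl fun k _ => ?_; ring
    _ ≤ log p * (4 * (p : ℝ)⁻¹ ^ 2) := by gcongr
    _ = 4 * (log p / (p : ℝ) ^ 2) := by ring

theorem summable_log_div_sq : Summable fun n : ℕ => log n / (n : ℝ) ^ 2 := by
  refine Summable.of_nonneg_of_le (fun n => by positivity) (fun n => ?_)
    ((summable_nat_rpow.2 (by norm_num : (-3 / 2 : ℝ) < -1)).mul_left 2)
  rcases n.eq_zero_or_pos with rfl | hn
  · simp
  have hn' : (0 : ℝ) < n := by exact_mod_cast hn
  calc log n / (n : ℝ) ^ 2 ≤ (n : ℝ) ^ (1 / 2 : ℝ) / (1 / 2) / (n : ℝ) ^ 2 := by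
        gcongr; exact log_le_rpow_div n.cast_nonneg (by norm_num)
    _ = 2 * (n : ℝ) ^ (-3 / 2 : ℝ) := by
        rw [show (-3 / 2 : ℝ) = 1 / 2 - 2 by norm_num, rpow_sub hn', rpow_two]; ring

theorem sub_one_mul_log_div_pow_nonneg (p : ℕ) {k : ℕ} (hk : 1 ≤ k) :
    0 ≤ ((k : ℝ) - 1) * log p / (p : ℝ) ^ k := by
  have hk' : (1 : ℝ) ≤ k := by exact_mod_cast hk
  have hlog := log_natCast_nonneg p
  positivity

theorem abs_sum_ppow_sub_one_mul_log_div_pow_le (n : ℕ) :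
    |∑ q ∈ ppow n, ((q.2 : ℝ) - 1) * log q.1 / (q.1 : ℝ) ^ q.2| ≤
      4 * ∑' p : ℕ, log p / (p : ℝ) ^ 2 := by
  rw [abs_of_nonneg (sum_nonneg fun q hq => sub_one_mul_log_div_pow_nonneg _ (mem_ppow.1 hq).2.1)]
  have hsub : ppow n ⊆ {p ∈ range (n + 1) | p.Prime} ×ˢ Icc 1 n := by
    intro q hq
    simp only [ppow, mem_filter, mem_product, mem_range, mem_Icc] at hq ⊢
    obtain ⟨⟨hp_lt, hk_lt⟩, hp, hk, -⟩ := hq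
    exact ⟨⟨hp_lt, hp⟩, hk, by omega⟩
  calc ∑ q ∈ ppow n, ((q.2 : ℝ) - 1) * log q.1 / (q.1 : ℝ) ^ q.2
      ≤ ∑ q ∈ {p ∈ range (n + 1) | p.Prime} ×ˢ Icc 1 n,
          ((q.2 : ℝ) - 1) * log q.1 / (q.1 : ℝ) ^ q.2 := by
        exact sum_le_sum_of_subset_of_nonneg hsub fun q hq _ =>
          sub_one_mul_log_div_pow_nonneg _ (mem_Icc.1 (mem_product.1 hq).2).1
    _ = ∑ p ∈ range (n + 1) with p.Prime, ∑ k ∈ Icc 1 n, ((k : ℝ) - 1) * log p / (p : ℝ) ^ k :=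
        sum_product ..
    _ ≤ ∑ p ∈ range (n + 1) with p.Prime, 4 * (log p / (p : ℝ) ^ 2) :=
        sum_le_sum fun p hp => sum_Icc_sub_one_mul_log_div_pow_le (mem_filter.1 hp).2.two_le n
    _ ≤ 4 * ∑' p : ℕ, log p / (p : ℝ) ^ 2 := by
        rw [← mul_sum]
        gcongr
        exact summable_log_div_sq.sum_le_tsum _ fun p _ => by positivity

theorem sum_log_primepow :
    ∃ C : ℝ, ∀ n : ℕ, 2 ≤ n →
      |(∑ q ∈ ppow n, (q.2 : ℝ) * Real.log q.1 / (q.1 : ℝ) ^ q.2) - Real.log n| ≤ C := by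
  refine ⟨(log 4 + 4) + 4 * ∑' p : ℕ, log p / (p : ℝ) ^ 2, fun n _ => ?_⟩
  set tail := ∑ q ∈ ppow n, ((q.2 : ℝ) - 1) * log q.1 / (q.1 : ℝ) ^ q.2
  have hsplit : ∑ q ∈ ppow n, (q.2 : ℝ) * log q.1 / (q.1 : ℝ) ^ q.2 =
      ∑ m ∈ Ioc 0 n, Λ m / m + tail := by
    rw [← sum_ppow_log_div_pow, ← sum_add_distrib]
    exact sum_congr rfl fun q _ => by ring
  calc |∑ q ∈ ppow n, (q.2 : ℝ) * log q.1 / (q.1 : ℝ) ^ q.2 - log n|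
      = |(∑ m ∈ Ioc 0 n, Λ m / m - log n) + tail| := by rw [hsplit, add_sub_right_comm]
    _ ≤ |∑ m ∈ Ioc 0 n, Λ m / m - log n| + |tail| := abs_add_le _ _
    _ ≤ _ := add_le_add (abs_sum_vonMangoldt_div_sub_log_le n)
        (abs_sum_ppow_sub_one_mul_log_div_pow_le n)
end

section
/- If an additive arithmetic function f satisfies f(m) = O(ln m), then ∑_{p^α ≤ n, α ≥ 1} f(p^α)²/p^α = ∑_{p ≤ n} f(p)²/p + O(1) as n → ∞. -/
def primesLE (n : ℕ) : Finset ℕ := (Finset.range (n+1)).filter Nat.Prime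

open Real Finset

lemma filter_ppow_not_two_le (n : ℕ) :
    (ppow n).filter (fun q => ¬ 2 ≤ q.2) =
      (primesLE n).map ⟨fun p => (p, 1), Prod.mk_left_injective 1⟩ := by
  ext ⟨p, a⟩
  simp only [ppow, primesLE, mem_filter, mem_product, mem_range, mem_map,
    Function.Embedding.coeFn_mk, Prod.mk.injEq]
  constructor
  · rintro ⟨⟨⟨hp, -⟩, hprime, ha, -⟩, ha2⟩
    exact ⟨p, ⟨hp, hprime⟩, rfl, by omega⟩
  · rintro ⟨p, ⟨hp, hprime⟩, rfl, rfl⟩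
    have := hprime.two_le
    exact ⟨⟨⟨hp, by omega⟩, hprime, le_rfl, by rw [pow_one]; omega⟩, by omega⟩

lemma sum_ppow_eq_sum_primesLE_add {M : Type*} [AddCommMonoid M] (F : ℕ × ℕ → M) (n : ℕ) :
    ∑ q ∈ ppow n, F q =
      ∑ p ∈ primesLE n, F (p, 1) + ∑ q ∈ (ppow n).filter (fun q => 2 ≤ q.2), F q := by
  rw [← sum_filter_not_add_sum_filter _ (fun q => 2 ≤ q.2), filter_ppow_not_two_le, sum_map]
  rfl

lemma sq_div_le_of_abs_le_mul_log {x y C : ℝ} (hx : 1 ≤ x) (hy : |y| ≤ C * log x) :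
    y ^ 2 / x ≤ 64 * C ^ 2 * x ^ (-(3 / 4 : ℝ)) := by
  have hx₀ : 0 < x := by linarith
  have hlog : log x ≤ 8 * x ^ (1 / 8 : ℝ) := by
    have := log_le_rpow_div hx₀.le (by norm_num : (0 : ℝ) < 1 / 8)
    linarith
  have hsq : y ^ 2 ≤ C ^ 2 * (8 * x ^ (1 / 8 : ℝ)) ^ 2 := by
    calc y ^ 2 = |y| ^ 2 := (sq_abs y).symm
      _ ≤ (C * log x) ^ 2 := by gcongr
      _ = C ^ 2 * log x ^ 2 := mul_pow _ _ _
      _ ≤ C ^ 2 * (8 * x ^ (1 / 8 : ℝ)) ^ 2 := by gcongr; exact log_nonneg hx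
  calc y ^ 2 / x ≤ C ^ 2 * (8 * x ^ (1 / 8 : ℝ)) ^ 2 / x := by gcongr
    _ = 64 * C ^ 2 * x ^ (-(3 / 4 : ℝ)) := by
      rw [mul_pow, ← rpow_natCast (x ^ _), ← rpow_mul hx₀.le,
        show (-(3 / 4 : ℝ)) = (1 / 8 : ℝ) * (2 : ℕ) - 1 by norm_num, rpow_sub_one hx₀.ne']
      ring

lemma rpow_neg_three_quarters_pow_le {p a : ℕ} (hp : 2 ≤ p) (ha : 2 ≤ a) :
    ((p : ℝ) ^ a) ^ (-(3 / 4 : ℝ)) ≤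
      (p : ℝ) ^ (-(3 / 2 : ℝ)) * ((2 : ℝ) ^ (-(3 / 4 : ℝ))) ^ (a - 2) := by
  have hnat : p ^ 2 * 2 ^ (a - 2) ≤ p ^ a := by
    calc p ^ 2 * 2 ^ (a - 2) ≤ p ^ 2 * p ^ (a - 2) := by gcongr
      _ = p ^ a := by rw [← pow_add]; congr 1; omega
  have hreal : ((p : ℝ) ^ 2 * 2 ^ (a - 2)) ≤ (p : ℝ) ^ a := by exact_mod_cast hnat
  calc ((p : ℝ) ^ a) ^ (-(3 / 4 : ℝ)) ≤ ((p : ℝ) ^ 2 * 2 ^ (a - 2)) ^ (-(3 / 4 : ℝ)) :=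
        rpow_le_rpow_of_nonpos (by positivity) hreal (by norm_num)
    _ = _ := by
      rw [mul_rpow (by positivity) (by positivity), ← rpow_natCast_mul (by positivity),
        ← rpow_pow_comm (by norm_num)]
      norm_num

noncomputable def tailWeight (q : ℕ × ℕ) : ℝ :=
  (q.1 : ℝ) ^ (-(3 / 2 : ℝ)) * ((2 : ℝ) ^ (-(3 / 4 : ℝ))) ^ (q.2 - 2)

lemma summable_tailWeight : Summable tailWeight := by
  have hr : (2 : ℝ) ^ (-(3 / 4 : ℝ)) < 1 := rpow_lt_one_of_one_lt_of_neg (by norm_num) (by norm_num)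
  have hgeom : Summable fun a : ℕ => ((2 : ℝ) ^ (-(3 / 4 : ℝ))) ^ (a - 2) := by
    rw [← summable_nat_add_iff 2]
    simpa only [Nat.add_sub_cancel] using summable_geometric_of_lt_one (by positivity) hr
  have hrpow : Summable fun p : ℕ => (p : ℝ) ^ (-(3 / 2 : ℝ)) :=
    summable_nat_rpow.mpr (by norm_num)
  exact (hrpow.mul_of_nonneg hgeom (fun _ => by positivity) (fun _ => by positivity) :)

lemma sum_sq_div_pow_le_tsum_tailWeight {f : ℕ → ℝ} {C : ℝ}
    (hf : ∀ m : ℕ, 2 ≤ m → |f m| ≤ C * log m) {s : Finset (ℕ × ℕ)}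
    (hs : ∀ q ∈ s, 2 ≤ q.1 ∧ 2 ≤ q.2) :
    ∑ q ∈ s, f (q.1 ^ q.2) ^ 2 / (q.1 : ℝ) ^ q.2 ≤ 64 * C ^ 2 * ∑' q, tailWeight q := by
  have hterm : ∀ q ∈ s, f (q.1 ^ q.2) ^ 2 / (q.1 : ℝ) ^ q.2 ≤ 64 * C ^ 2 * tailWeight q := by
    rintro ⟨p, a⟩ hq
    obtain ⟨hp, ha⟩ := hs _ hq
    have hm : 2 ≤ p ^ a := hp.trans (Nat.le_self_pow (by omega) p)
    have hx : (1 : ℝ) ≤ ((p ^ a : ℕ) : ℝ) := by exact_mod_cast (by omega : 1 ≤ p ^ a)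
    have hle := sq_div_le_of_abs_le_mul_log hx (hf _ hm)
    push_cast at hle
    exact hle.trans (by gcongr; exact rpow_neg_three_quarters_pow_le hp ha)
  calc ∑ q ∈ s, f (q.1 ^ q.2) ^ 2 / (q.1 : ℝ) ^ q.2
      ≤ ∑ q ∈ s, 64 * C ^ 2 * tailWeight q := sum_le_sum hterm
    _ = 64 * C ^ 2 * ∑ q ∈ s, tailWeight q := (mul_sum _ _ _).symm
    _ ≤ 64 * C ^ 2 * ∑' q, tailWeight q := by
      gcongr
      exact summable_tailWeight.sum_le_tsum s fun _ _ => by unfold tailWeight; positivity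

theorem additive_variance_reduction_general (f : ℕ → ℝ)
    (hbound : ∃ C : ℝ, ∀ m : ℕ, 2 ≤ m → |f m| ≤ C * Real.log m) :
    ∃ C : ℝ, ∀ n : ℕ, 2 ≤ n →
      |(∑ q ∈ ppow n, (f (q.1 ^ q.2)) ^ 2 / (q.1 : ℝ) ^ q.2)
        - ∑ p ∈ primesLE n, (f p) ^ 2 / p| ≤ C := by
  obtain ⟨C, hf⟩ := hbound
  refine ⟨64 * C ^ 2 * ∑' q, tailWeight q, fun n _ => ?_⟩
  rw [sum_ppow_eq_sum_primesLE_add]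
  simp only [pow_one, add_sub_cancel_left]
  rw [abs_of_nonneg (sum_nonneg fun _ _ => by positivity)]
  refine sum_sq_div_pow_le_tsum_tailWeight hf fun q hq => ?_
  simp only [ppow, mem_filter] at hq
  exact ⟨hq.1.2.1.two_le, hq.2⟩

theorem additive_variance_reduction (f : ℕ → ℝ)
    (hadd : ∀ a b : ℕ, Nat.Coprime a b → f (a * b) = f a + f b)
    (hbound : ∃ C : ℝ, ∀ m : ℕ, 2 ≤ m → |f m| ≤ C * Real.log m) :
    ∃ C : ℝ, ∀ n : ℕ, 2 ≤ n →
      |(∑ q ∈ ppow n, (f (q.1 ^ q.2)) ^ 2 / (q.1 : ℝ) ^ q.2)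
        - ∑ p ∈ primesLE n, (f p) ^ 2 / p| ≤ C :=
  additive_variance_reduction_general f hbound
end
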